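/- Let G be a connected planar graph embedded in the sphere S², let F be its set of faces, E its set of edges, and fix two distinct faces F_{n-1}, F_n (the faces adjacent to a basepoint edge). Let X be the F₂-vector space with basis the faces other than F_{n-1} and F_n, let Y be the F₂-vector space with basis indexed by E (edges not containing the basepoint), and let f : X → Y send each basis face to the sum of the edges on its boundary. If the diagram is connected and F_{n-1}, F_n are adjacent (share the basepoint edge, which is excluded from Y), then f is injective. -/

import Mathlib

/-!
Extend an element `c` of the kernel by zero to all faces. Every edge lies on exactly two faces,
so over `𝔽₂` vanishing of `f c` on an edge says the two faces along it carry the same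
coefficient. Since the dual graph is connected, the extended coefficients are constant, and
they vanish on the removed face `Fa`.
-/

open Finset

theorem Finset.sum_subtype_ite_eq_sum_filter_extend {α M : Type*} [Fintype α] [AddCommMonoid M]
    {p : α → Prop} [DecidablePred p] (c : Subtype p → M) (s : α → Prop) [DecidablePred s] :
    ∑ a : Subtype p, (if s a then c a else 0) =
      ∑ a ∈ univ.filter s, Function.extend Subtype.val c 0 a := by
  have hsupp : ∀ a ∈ univ, (if s a then Function.extend Subtype.val c 0 a else 0) ≠ 0 → p a := by
    intro a _ ha
    by_contra hpa
    rw [Function.extend_apply' _ _ _ fun ⟨b, hb⟩ => hpa (hb ▸ b.2)] at ha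
    simp at ha
  rw [sum_filter, ← sum_filter_of_ne hsupp, ← sum_subtype_eq_sum_filter]
  simp only [Subtype.val_injective.extend_apply, subtype_univ]

section FaceBoundary

variable {Faces Edges R : Type*} [Fintype Faces] [DecidableEq Faces] [DecidableEq Edges]
  [Ring R] [CharP R 2] {boundary : Faces → Finset Edges} {g : Faces → R}

theorem eq_of_mem_boundary_of_sum_eq_zero {e : Edges}
    (htwo : #(univ.filter fun F => e ∈ boundary F) = 2)
    (hsum : ∑ F ∈ univ.filter (fun F => e ∈ boundary F), g F = 0)
    {A B : Faces} (hA : e ∈ boundary A) (hB : e ∈ boundary B) : g A = g B := by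
  obtain rfl | hAB := eq_or_ne A B
  · rfl
  have hpair : univ.filter (fun F => e ∈ boundary F) = {A, B} :=
    (eq_of_subset_of_card_le (by simp [insert_subset_iff, hA, hB])
      (by rw [htwo, card_pair hAB])).symm
  rwa [hpair, sum_pair hAB, CharTwo.add_eq_zero] at hsum

theorem eq_zero_of_sum_boundary_eq_zero
    (htwo : ∀ e : Edges, #(univ.filter fun F => e ∈ boundary F) = 2)
    (hsum : ∀ e : Edges, ∑ F ∈ univ.filter (fun F => e ∈ boundary F), g F = 0)
    {F₀ : Faces} (hF₀ : g F₀ = 0)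
    (hconn : ∀ F, Relation.ReflTransGen
      (fun A B : Faces => ∃ e : Edges, e ∈ boundary A ∧ e ∈ boundary B) F₀ F) :
    g = 0 := by
  funext F
  have hconst : Relation.ReflTransGen Eq (g F₀) (g F) :=
    (hconn F).lift g fun _ _ ⟨e, hA, hB⟩ =>
      eq_of_mem_boundary_of_sum_eq_zero (htwo e) (hsum e) hA hB
  rw [Pi.zero_apply, ← hF₀, Relation.reflTransGen_eq_self.le _ _ hconst]

end FaceBoundary

theorem face_boundary_map_injective_general
    (Faces Edges : Type) [Fintype Faces] [DecidableEq Faces]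
    [DecidableEq Edges]
    (boundary : Faces → Finset Edges)
    (Fa Fb : Faces)
    (htwo : ∀ e : Edges, (Finset.univ.filter (fun F => e ∈ boundary F)).card = 2)
    (hconn : ∀ F F' : Faces,
      Relation.ReflTransGen (fun A B : Faces => ∃ e : Edges, e ∈ boundary A ∧ e ∈ boundary B)
        F F') :
    Function.Injective
      (fun (c : {F : Faces // F ≠ Fa ∧ F ≠ Fb} → ZMod 2) (e : Edges) =>
        ∑ F : {F : Faces // F ≠ Fa ∧ F ≠ Fb}, if e ∈ boundary F.1 then c F else 0) := by
  intro c₁ c₂ h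
  set g : Faces → ZMod 2 :=
    Function.extend Subtype.val c₁ 0 - Function.extend Subtype.val c₂ 0
  have hsum : ∀ e, ∑ F ∈ univ.filter (fun F => e ∈ boundary F), g F = 0 := fun e => by
    simp only [g, Pi.sub_apply, sum_sub_distrib,
      ← sum_subtype_ite_eq_sum_filter_extend, congrFun h e, sub_self]
  have hFa : g Fa = 0 := by
    have hout : ¬∃ F : {F : Faces // F ≠ Fa ∧ F ≠ Fb}, F.1 = Fa := fun ⟨F, hF⟩ => F.2.1 hF
    simp only [g, Pi.sub_apply, Function.extend_apply' _ _ _ hout, sub_self]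
  have hg := eq_zero_of_sum_boundary_eq_zero htwo hsum hFa (hconn Fa)
  funext F
  simpa [g, sub_eq_zero, Subtype.val_injective.extend_apply] using congrFun hg F.1

/-- Injectivity of the face-to-edge boundary map over `𝔽₂`.
A planar graph embedded in `S²` is encoded combinatorially by its set of faces, its set of
edges `Edges` (the basepoint edge is excluded), and a boundary map assigning to each face
the finite set of its boundary edges.  The hypotheses say every edge lies on exactly two
faces, and the dual graph (faces adjacent when they share an edge of `Edges`) is connected.
Two distinct faces `Fa, Fb` (those adjacent to the basepoint edge) are distinguished.
Then the `𝔽₂`-linear map sending a face other than `Fa, Fb` to the sum of its boundary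
edges is injective. -/
theorem face_boundary_map_injective
    (Faces Edges : Type) [Fintype Faces] [DecidableEq Faces] [Fintype Edges]
    [DecidableEq Edges]
    (boundary : Faces → Finset Edges)
    (Fa Fb : Faces) (hne : Fa ≠ Fb)
    (htwo : ∀ e : Edges, (Finset.univ.filter (fun F => e ∈ boundary F)).card = 2)
    (hconn : ∀ F F' : Faces,
      Relation.ReflTransGen (fun A B : Faces => ∃ e : Edges, e ∈ boundary A ∧ e ∈ boundary B)
        F F') :
    Function.Injective
      (fun (c : {F : Faces // F ≠ Fa ∧ F ≠ Fb} → ZMod 2) (e : Edges) =>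
        ∑ F : {F : Faces // F ≠ Fa ∧ F ≠ Fb}, if e ∈ boundary F.1 then c F else 0) :=
  face_boundary_map_injective_general Faces Edges boundary Fa Fb htwo hconn
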